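/- Assume that for ℓ ∈ {1,2} the measurable kernel γ_ℓ : Ω×Ω → [0,∞) satisfies condition (N) with a common constant γ∞ ≥ 1, let (u⁰,v⁰) ∈ X⁺ × X⁺, and suppose that for some δ ≥ 0 and ε > 0 one has ‖u⁰‖∞ ≤ 1 + δ and ‖v⁰‖∞ < (f+κ−ε)/(1+δ). Then the global solution (u,v) of (CNLGS) satisfies the exponential decay estimate ‖v(t)‖∞ ≤ e^{−εt} ‖v⁰‖∞ for all t ≥ 0. -/

import Mathlib

open MeasureTheory Real Set Filter

noncomputable section

/-- The nonlocal operator `Γ_γ z(x) = ∫_Ω γ(x,y)(z(y) - z(x)) dy`. -/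
def GammaOp {n : ℕ} (Ω : Set (EuclideanSpace ℝ (Fin n)))
    (γ : EuclideanSpace ℝ (Fin n) → EuclideanSpace ℝ (Fin n) → ℝ)
    (z : EuclideanSpace ℝ (Fin n) → ℝ) (x : EuclideanSpace ℝ (Fin n)) : ℝ :=
  ∫ y in Ω, γ x y * (z y - z x)

/-- Condition (N): γ is a measurable nonnegative kernel with
`∫_Ω γ(y,x) dy = ∫_Ω γ(x,y) dy ≤ γ∞` for all `x ∈ Ω`. -/
def KernelCondN {n : ℕ} (Ω : Set (EuclideanSpace ℝ (Fin n)))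
    (γ : EuclideanSpace ℝ (Fin n) → EuclideanSpace ℝ (Fin n) → ℝ) (γinf : ℝ) : Prop :=
  Measurable (Function.uncurry γ) ∧ (∀ x y, 0 ≤ γ x y) ∧
    ∀ x ∈ Ω, IntegrableOn (fun y => γ x y) Ω ∧ IntegrableOn (fun y => γ y x) Ω ∧
      (∫ y in Ω, γ y x) = (∫ y in Ω, γ x y) ∧ (∫ y in Ω, γ x y) ≤ γinf

/-- The `L∞(Ω)` norm. -/
def supN {n : ℕ} (Ω : Set (EuclideanSpace ℝ (Fin n)))
    (z : EuclideanSpace ℝ (Fin n) → ℝ) : ℝ :=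
  (eLpNormEssSup z (volume.restrict Ω)).toReal

/-- `(u,v)` is a (C¹ in time, L∞ in space) solution of the nonlocal Gray-Scott system
(CNLGS) with kernels `γ₁, γ₂` and initial data `(u0, v0)`. -/
def IsGSSol {n : ℕ} (Ω : Set (EuclideanSpace ℝ (Fin n))) (d₁ d₂ f κ : ℝ)
    (γ₁ γ₂ : EuclideanSpace ℝ (Fin n) → EuclideanSpace ℝ (Fin n) → ℝ)
    (u0 v0 : EuclideanSpace ℝ (Fin n) → ℝ)
    (u v : ℝ → EuclideanSpace ℝ (Fin n) → ℝ) : Prop :=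
  (∀ t, 0 ≤ t → MemLp (u t) ⊤ (volume.restrict Ω) ∧ MemLp (v t) ⊤ (volume.restrict Ω)) ∧
  (∀ x ∈ Ω, u 0 x = u0 x ∧ v 0 x = v0 x) ∧
  (∀ x ∈ Ω, ∀ t, 0 ≤ t →
    HasDerivWithinAt (fun s => u s x)
      (d₁ * GammaOp Ω γ₁ (u t) x - u t x * (v t x) ^ 2 + f * (1 - u t x)) (Ici 0) t ∧
    HasDerivWithinAt (fun s => v s x)
      (d₂ * GammaOp Ω γ₂ (v t) x + u t x * (v t x) ^ 2 - (f + κ) * v t x) (Ici 0) t)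

/-- A time-dependent function is nonnegative a.e. in `Ω` at each time `t ≥ 0`. -/
def NonnegSol {n : ℕ} (Ω : Set (EuclideanSpace ℝ (Fin n)))
    (w : ℝ → EuclideanSpace ℝ (Fin n) → ℝ) : Prop :=
  ∀ t, 0 ≤ t → ∀ᵐ x ∂(volume.restrict Ω), 0 ≤ w t x

/-!
The region `u ≤ 1 + δ`, `v ≤ ‖v⁰‖∞ e^{-εt}` is invariant: where `u` touches `1 + δ` the reaction
pushes it down, and where `v` touches `‖v⁰‖∞ e^{-εt}` the linear decay rate `f + κ` beats
`u v + ε ≤ (1 + δ) ‖v⁰‖∞ + ε`, while the nonlocal terms are controlled by the excess of the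
solution over the region elsewhere.

The solution is only given pointwise in `x` for each time and a.e. in `x` at each time, so we
work on a full-measure set of points on whose trajectories `u, v ≥ 0` at all times (nonnegativity
at rational times plus continuity in time). There `e^{Kt} (u + v)` is nondecreasing for a suitable
`K`, which bounds the solution up to time `T` by its `L∞` norm at time `T`. With this bound, the
supremum `M` of the excess over a short time window of length `h` satisfies `M ≤ L M h`, hence
`M = 0`, window after window.
-/

open Topology

theorem le_add_mul_of_hasDerivWithinAt_le_of_le {g g' : ℝ → ℝ} {a b L D : ℝ} (hab : a ≤ b)
    (hg : ContinuousOn g (Icc a b)) (hg' : ∀ s ∈ Ico a b, HasDerivWithinAt g (g' s) (Ici s) s)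
    (ha : g a ≤ L) (hD : 0 ≤ D) (bound : ∀ s ∈ Ico a b, L ≤ g s → g' s ≤ D) :
    g b ≤ L + D * (b - a) := by
  -- the fencing theorem needs a strict slope: use the barriers `L + (D + e) (s - a)`, `e → 0`
  have hlim : Tendsto (fun e => L + (D + e) * (b - a)) (𝓝[>] 0) (𝓝 (L + (D + 0) * (b - a))) :=
    ((by fun_prop : Continuous fun e : ℝ => L + (D + e) * (b - a)).tendsto 0).mono_left
      nhdsWithin_le_nhds
  rw [add_zero] at hlim
  refine ge_of_tendsto hlim (eventually_mem_nhdsWithin.mono fun e (he : 0 < e) => ?_)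
  refine image_le_of_deriv_right_lt_deriv_boundary' (B := fun s => L + (D + e) * (s - a))
    (B' := fun _ => D + e) hg hg' (by simpa using ha) (by fun_prop) (fun s _ => ?_) ?_
    ⟨hab, le_rfl⟩
  · simpa using ((hasDerivAt_id s).sub_const a |>.const_mul (D + e) |>.const_add L).hasDerivWithinAt
  · intro s hs hgs
    refine (bound s hs ?_).trans_lt (by linarith)
    rw [hgs]
    nlinarith [hs.1]

theorem nonneg_of_continuousOn_Ici_of_rat {g : ℝ → ℝ} (hg : ContinuousOn g (Ici 0))
    (hq : ∀ q : ℚ, 0 ≤ (q : ℝ) → 0 ≤ g q) {t : ℝ} (ht : 0 ≤ t) : 0 ≤ g t := by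
  have hclosed : IsClosed (Ici 0 ∩ g ⁻¹' Ici 0) :=
    hg.preimage_isClosed_of_isClosed isClosed_Ici isClosed_Ici
  have hrat : Ioi 0 ∩ range ((↑) : ℚ → ℝ) ⊆ Ici 0 ∩ g ⁻¹' Ici 0 := by
    rintro _ ⟨hpos, q, rfl⟩
    exact ⟨mem_Ici.mpr (mem_Ioi.mp hpos).le, hq q (mem_Ioi.mp hpos).le⟩
  have hdense : closure (Ioi (0 : ℝ)) ⊆ closure (Ioi 0 ∩ range ((↑) : ℚ → ℝ)) :=
    closure_minimal (Rat.denseRange_cast.open_subset_closure_inter isOpen_Ioi) isClosed_closure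
  rw [closure_Ioi] at hdense
  exact (closure_minimal hrat hclosed (hdense ht)).2

theorem ae_forall_nonneg_of_continuousOn {α : Type*} [MeasurableSpace α] {μ : Measure α}
    {w : ℝ → α → ℝ} (hw : ∀ t, 0 ≤ t → ∀ᵐ x ∂μ, 0 ≤ w t x)
    (hcont : ∀ᵐ x ∂μ, ContinuousOn (fun s => w s x) (Ici 0)) :
    ∀ᵐ x ∂μ, ∀ t, 0 ≤ t → 0 ≤ w t x := by
  have hrat : ∀ᵐ x ∂μ, ∀ q : ℚ, 0 ≤ (q : ℝ) → 0 ≤ w q x := by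
    rw [ae_all_iff]
    intro q
    by_cases hq : 0 ≤ (q : ℝ)
    · filter_upwards [hw q hq] with x hx _ using hx
    · exact Eventually.of_forall fun x hq' => absurd hq' hq
  filter_upwards [hrat, hcont] with x hx hxc t ht
  exact nonneg_of_continuousOn_Ici_of_rat hxc hx ht

theorem eq_zero_of_le_mul_sup_of_window {α : Type*} {S : Set α} {E : ℝ → α → ℝ}
    {t₀ t₁ B L : ℝ} (hL : 0 ≤ L) (hlen : L * (t₁ - t₀) ≤ 1 / 2)
    (hE : ∀ t ∈ Icc t₀ t₁, ∀ x ∈ S, 0 ≤ E t x ∧ E t x ≤ B)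
    (hstep : ∀ t ∈ Icc t₀ t₁, ∀ M, 0 ≤ M → (∀ s ∈ Icc t₀ t, ∀ x ∈ S, E s x ≤ M) →
      ∀ x ∈ S, E t x ≤ L * M * (t - t₀)) :
    ∀ t ∈ Icc t₀ t₁, ∀ x ∈ S, E t x = 0 := by
  let W := {p : ℝ × α // p.1 ∈ Icc t₀ t₁ ∧ p.2 ∈ S}
  let M := ⨆ p : W, E p.1.1 p.1.2
  have hbdd : BddAbove (range fun p : W => E p.1.1 p.1.2) := ⟨B, by
    rintro _ ⟨⟨⟨s, x⟩, hs, hx⟩, rfl⟩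
    exact (hE s hs x hx).2⟩
  have hle_M : ∀ s ∈ Icc t₀ t₁, ∀ x ∈ S, E s x ≤ M :=
    fun s hs x hx => le_ciSup hbdd (⟨(s, x), hs, hx⟩ : W)
  have hM : 0 ≤ M := Real.iSup_nonneg fun p => (hE _ p.2.1 _ p.2.2).1
  have hhalf : ∀ s ∈ Icc t₀ t₁, ∀ x ∈ S, E s x ≤ M / 2 := by
    intro s hs x hx
    calc E s x ≤ L * M * (s - t₀) :=
          hstep s hs M hM (fun r hr => hle_M r ⟨hr.1, hr.2.trans hs.2⟩) x hx
      _ ≤ L * M * (t₁ - t₀) := by gcongr; exact hs.2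
      _ ≤ M / 2 := by nlinarith
  have hM0 : M ≤ 0 := by
    have : M ≤ M / 2 := Real.iSup_le (fun p => hhalf _ p.2.1 _ p.2.2) (by linarith)
    linarith
  exact fun t ht x hx => le_antisymm ((hle_M t ht x hx).trans hM0) (hE t ht x hx).1

theorem eq_zero_of_le_mul_sup_of_bounded {α : Type*} {S : Set α} {E : ℝ → α → ℝ} {T B L : ℝ}
    (hL : 0 ≤ L) (hE : ∀ t ∈ Icc 0 T, ∀ x ∈ S, 0 ≤ E t x ∧ E t x ≤ B)
    (h0 : ∀ x ∈ S, E 0 x = 0)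
    (hstep : ∀ t₀ t M, 0 ≤ t₀ → t₀ ≤ t → t ≤ T → 0 ≤ M →
      (∀ s ∈ Icc 0 t₀, ∀ x ∈ S, E s x = 0) → (∀ s ∈ Icc t₀ t, ∀ x ∈ S, E s x ≤ M) →
      ∀ x ∈ S, E t x ≤ L * M * (t - t₀)) :
    ∀ t ∈ Icc 0 T, ∀ x ∈ S, E t x = 0 := by
  set h := 1 / (2 * L + 2) with hh
  have hpos : 0 < h := by positivity
  have extend : ∀ t₀, 0 ≤ t₀ → t₀ ≤ T → (∀ s ∈ Icc 0 t₀, ∀ x ∈ S, E s x = 0) →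
      ∀ s ∈ Icc 0 (min (t₀ + h) T), ∀ x ∈ S, E s x = 0 := by
    intro t₀ ht₀ ht₀T hvanish s hs
    rcases le_or_gt s t₀ with hst | hst
    · exact hvanish s ⟨hs.1, hst⟩
    have hwin : ∀ t ∈ Icc t₀ (min (t₀ + h) T), t ∈ Icc 0 T :=
      fun t ht => ⟨ht₀.trans ht.1, ht.2.trans (min_le_right _ _)⟩
    refine eq_zero_of_le_mul_sup_of_window hL ?_ (fun t ht => hE t (hwin t ht))
      (fun t ht M hM => hstep t₀ t M ht₀ ht.1 (hwin t ht).2 hM hvanish) s ⟨hst.le, hs.2⟩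
    calc L * (min (t₀ + h) T - t₀) ≤ L * h := by
          gcongr; linarith [min_le_left (t₀ + h) T]
      _ ≤ 1 / 2 := by
          rw [hh, mul_one_div, div_le_div_iff₀ (by positivity) (by norm_num)]
          linarith
  have hind : ∀ k : ℕ, ∀ s ∈ Icc 0 (min (k * h) T), ∀ x ∈ S, E s x = 0 := by
    intro k
    induction k with
    | zero =>
      intro s hs x hx
      obtain rfl : s = 0 := le_antisymm (by simpa using hs.2.trans (min_le_left _ _)) hs.1
      exact h0 x hx
    | succ k ih =>
      intro s hs x hx
      have hT : 0 ≤ T := hs.1.trans (hs.2.trans (min_le_right _ _))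
      refine extend _ (le_min (by positivity) hT) (min_le_right _ _) ih s ⟨hs.1, hs.2.trans ?_⟩ x hx
      refine le_min ?_ (min_le_right _ _)
      rw [← min_add_add_right]
      exact min_le_min (by push_cast; linarith) (by linarith)
  intro t ht
  obtain ⟨k, hk⟩ := exists_nat_gt (T / h)
  have : T ≤ k * h := by rw [div_lt_iff₀ hpos] at hk; linarith
  exact hind k t ⟨ht.1, le_min (ht.2.trans this) ht.2⟩

section SupNorm

variable {n : ℕ} {Ω : Set (EuclideanSpace ℝ (Fin n))} {z : EuclideanSpace ℝ (Fin n) → ℝ}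

theorem supN_nonneg : 0 ≤ supN Ω z := ENNReal.toReal_nonneg

theorem ae_abs_le_supN (hz : MemLp z ⊤ (volume.restrict Ω)) :
    ∀ᵐ x ∂(volume.restrict Ω), |z x| ≤ supN Ω z := by
  have hfin := hz.eLpNorm_lt_top
  rw [eLpNorm_exponent_top] at hfin
  filter_upwards [ae_le_eLpNormEssSup (f := z) (μ := volume.restrict Ω)] with x hx
  simpa [Real.norm_eq_abs, supN] using ENNReal.toReal_mono hfin.ne hx

theorem supN_le_of_ae_abs_le {C : ℝ} (hC : 0 ≤ C)
    (h : ∀ᵐ x ∂(volume.restrict Ω), |z x| ≤ C) : supN Ω z ≤ C := by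
  have hess : eLpNormEssSup z (volume.restrict Ω) ≤ ENNReal.ofReal C :=
    eLpNormEssSup_le_of_ae_bound (by simpa [Real.norm_eq_abs] using h)
  simpa [supN, ENNReal.toReal_ofReal hC] using ENNReal.toReal_mono ENNReal.ofReal_ne_top hess

end SupNorm

section Kernel

variable {n : ℕ} {Ω : Set (EuclideanSpace ℝ (Fin n))}
  {γ : EuclideanSpace ℝ (Fin n) → EuclideanSpace ℝ (Fin n) → ℝ} {γinf : ℝ}
  {z : EuclideanSpace ℝ (Fin n) → ℝ} {x : EuclideanSpace ℝ (Fin n)}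

theorem KernelCondN.integrableOn_mul (hγ : KernelCondN Ω γ γinf)
    (hz : MemLp z ⊤ (volume.restrict Ω)) (hx : x ∈ Ω) :
    IntegrableOn (fun y => γ x y * z y) Ω := by
  obtain ⟨hmeas, hpos, hint⟩ := hγ
  refine Integrable.mono' ((hint x hx).1.mul_const (supN Ω z))
    ((Measurable.of_uncurry_left hmeas).aestronglyMeasurable.mul hz.1) ?_
  filter_upwards [ae_abs_le_supN hz] with y hy
  rw [Real.norm_eq_abs, abs_mul, abs_of_nonneg (hpos x y)]
  exact mul_le_mul_of_nonneg_left hy (hpos x y)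

theorem KernelCondN.gammaOp_eq (hγ : KernelCondN Ω γ γinf)
    (hz : MemLp z ⊤ (volume.restrict Ω)) (hx : x ∈ Ω) :
    GammaOp Ω γ z x = (∫ y in Ω, γ x y * z y) - (∫ y in Ω, γ x y) * z x := by
  rw [← integral_mul_const, ← integral_sub (hγ.integrableOn_mul hz hx)
    ((hγ.2.2 x hx).1.mul_const (z x))]
  simp only [GammaOp, mul_sub]

theorem KernelCondN.gammaOp_le (hγ : KernelCondN Ω γ γinf)
    (hz : MemLp z ⊤ (volume.restrict Ω)) (hx : x ∈ Ω) {C M : ℝ} (hM : 0 ≤ M)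
    (hzx : C ≤ z x) (hbound : ∀ᵐ y ∂(volume.restrict Ω), z y ≤ C + M) :
    GammaOp Ω γ z x ≤ γinf * M := by
  have hmass : 0 ≤ ∫ y in Ω, γ x y := integral_nonneg fun y => hγ.2.1 x y
  have hint : (∫ y in Ω, γ x y * z y) ≤ (∫ y in Ω, γ x y) * (C + M) := by
    rw [← integral_mul_const]
    refine integral_mono_ae (hγ.integrableOn_mul hz hx) ((hγ.2.2 x hx).1.mul_const _) ?_
    filter_upwards [hbound] with y hy
    exact mul_le_mul_of_nonneg_left hy (hγ.2.1 x y)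
  rw [hγ.gammaOp_eq hz hx]
  nlinarith [(hγ.2.2 x hx).2.2.2]

theorem KernelCondN.neg_mul_le_gammaOp (hγ : KernelCondN Ω γ γinf)
    (hz : MemLp z ⊤ (volume.restrict Ω)) (hx : x ∈ Ω) (hzx : 0 ≤ z x)
    (hnonneg : ∀ᵐ y ∂(volume.restrict Ω), 0 ≤ z y) :
    -(γinf * z x) ≤ GammaOp Ω γ z x := by
  have hint : 0 ≤ ∫ y in Ω, γ x y * z y :=
    integral_nonneg_of_ae (hnonneg.mono fun y hy => mul_nonneg (hγ.2.1 x y) hy)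
  rw [hγ.gammaOp_eq hz hx]
  nlinarith [(hγ.2.2 x hx).2.2.2]

end Kernel

theorem mul_sq_sub_mul_le {u v φ A c C M : ℝ} (hv : 0 ≤ v) (hvC : v ≤ C) (hφ : 0 ≤ φ)
    (hM : 0 ≤ M) (hu : u ≤ φ + M) (hvA : v ≤ A + M) (hc : φ * A ≤ c) :
    u * v ^ 2 - c * v ≤ C * (C + φ) * M := by
  have hprod : u * v - φ * A ≤ M * (v + φ) := by nlinarith
  calc u * v ^ 2 - c * v ≤ v * (u * v - φ * A) := by nlinarith
    _ ≤ v * (M * (v + φ)) := mul_le_mul_of_nonneg_left hprod hv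
    _ ≤ C * ((C + φ) * M) :=
        mul_le_mul hvC (by nlinarith) (by positivity) (hv.trans hvC)
    _ = C * (C + φ) * M := by ring

section GrayScott

variable {n : ℕ} {Ω : Set (EuclideanSpace ℝ (Fin n))} {d₁ d₂ f κ γinf : ℝ}
  {γ₁ γ₂ : EuclideanSpace ℝ (Fin n) → EuclideanSpace ℝ (Fin n) → ℝ}
  {u0 v0 : EuclideanSpace ℝ (Fin n) → ℝ} {u v : ℝ → EuclideanSpace ℝ (Fin n) → ℝ}
  {x : EuclideanSpace ℝ (Fin n)}

namespace IsGSSol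

theorem continuousOn_u (hsol : IsGSSol Ω d₁ d₂ f κ γ₁ γ₂ u0 v0 u v) (hx : x ∈ Ω) :
    ContinuousOn (fun s => u s x) (Ici 0) :=
  fun t ht => (hsol.2.2 x hx t ht).1.continuousWithinAt

theorem continuousOn_v (hsol : IsGSSol Ω d₁ d₂ f κ γ₁ γ₂ u0 v0 u v) (hx : x ∈ Ω) :
    ContinuousOn (fun s => v s x) (Ici 0) :=
  fun t ht => (hsol.2.2 x hx t ht).2.continuousWithinAt

theorem monotoneOn_exp_mul_add (hsol : IsGSSol Ω d₁ d₂ f κ γ₁ γ₂ u0 v0 u v)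
    (hγ₁ : KernelCondN Ω γ₁ γinf) (hγ₂ : KernelCondN Ω γ₂ γinf) (hγinf : 0 ≤ γinf)
    (hd₁ : 0 ≤ d₁) (hd₂ : 0 ≤ d₂) (hf : 0 ≤ f) (hκ : 0 ≤ κ) (hupos : NonnegSol Ω u)
    (hvpos : NonnegSol Ω v) (hx : x ∈ Ω) (hux : ∀ s, 0 ≤ s → 0 ≤ u s x)
    (hvx : ∀ s, 0 ≤ s → 0 ≤ v s x) :
    MonotoneOn (fun s => exp (((d₁ + d₂) * γinf + f + κ) * s) * (u s x + v s x)) (Ici 0) := by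
  set K := (d₁ + d₂) * γinf + f + κ
  refine monotoneOn_of_hasDerivWithinAt_nonneg (convex_Ici 0)
    (f' := fun s => exp (K * s) * (K * (u s x + v s x) +
      ((d₁ * GammaOp Ω γ₁ (u s) x - u s x * v s x ^ 2 + f * (1 - u s x)) +
        (d₂ * GammaOp Ω γ₂ (v s) x + u s x * v s x ^ 2 - (f + κ) * v s x))))
    ((by fun_prop : Continuous fun s => exp (K * s)).continuousOn.mul
      ((hsol.continuousOn_u hx).add (hsol.continuousOn_v hx))) (fun s hs => ?_) (fun s hs => ?_)
  · rw [interior_Ici] at hs ⊢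
    have hode := hsol.2.2 x hx s (le_of_lt hs)
    exact (((hasDerivAt_id' s).const_mul K).exp.hasDerivWithinAt.mul
      ((hode.1.fun_add hode.2).mono Ioi_subset_Ici_self)).congr_deriv (by ring)
  · rw [interior_Ici] at hs
    have hs0 : 0 ≤ s := le_of_lt hs
    have hΓu := mul_le_mul_of_nonneg_left
      (hγ₁.neg_mul_le_gammaOp (hsol.1 s hs0).1 hx (hux s hs0) (hupos s hs0)) hd₁
    have hΓv := mul_le_mul_of_nonneg_left
      (hγ₂.neg_mul_le_gammaOp (hsol.1 s hs0).2 hx (hvx s hs0) (hvpos s hs0)) hd₂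
    have hcross : 0 ≤ (d₂ * γinf + κ) * u s x + d₁ * γinf * v s x + f := by
      have := hux s hs0; have := hvx s hs0; positivity
    refine mul_nonneg (exp_pos _).le ?_
    linarith

theorem u_le_add_mul (hsol : IsGSSol Ω d₁ d₂ f κ γ₁ γ₂ u0 v0 u v)
    (hγ₁ : KernelCondN Ω γ₁ γinf) (hγinf : 0 ≤ γinf) (hd₁ : 0 ≤ d₁) (hf : 0 ≤ f) (hx : x ∈ Ω)
    {φ M t₀ t : ℝ} (hφ : 1 ≤ φ) (hM : 0 ≤ M) (ht₀ : 0 ≤ t₀) (ht : t₀ ≤ t)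
    (hu₀ : u t₀ x ≤ φ) (hbound : ∀ s ∈ Ico t₀ t, ∀ᵐ y ∂(volume.restrict Ω), u s y ≤ φ + M) :
    u t x ≤ φ + d₁ * γinf * M * (t - t₀) := by
  refine le_add_mul_of_hasDerivWithinAt_le_of_le ht
    ((hsol.continuousOn_u hx).mono fun s hs => ht₀.trans hs.1)
    (fun s hs => (hsol.2.2 x hx s (ht₀.trans hs.1)).1.mono (Ici_subset_Ici.mpr (ht₀.trans hs.1)))
    hu₀ (by positivity) fun s hs hφu => ?_
  have hs0 : 0 ≤ s := ht₀.trans hs.1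
  have hΓ := mul_le_mul_of_nonneg_left
    (hγ₁.gammaOp_le (hsol.1 s hs0).1 hx hM hφu (hbound s hs)) hd₁
  nlinarith [mul_nonneg (by linarith : 0 ≤ u s x) (sq_nonneg (v s x)),
    mul_nonneg hf (by linarith : 0 ≤ u s x - 1)]

theorem v_le_add_mul (hsol : IsGSSol Ω d₁ d₂ f κ γ₁ γ₂ u0 v0 u v)
    (hγ₂ : KernelCondN Ω γ₂ γinf) (hγinf : 0 ≤ γinf) (hd₂ : 0 ≤ d₂) (hx : x ∈ Ω)
    {φ A ε C M t₀ t : ℝ} (hφ : 0 ≤ φ) (hA : 0 ≤ A) (hε : 0 ≤ ε) (hφA : φ * A ≤ f + κ - ε)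
    (hC : 0 ≤ C) (hM : 0 ≤ M) (ht₀ : 0 ≤ t₀) (ht : t₀ ≤ t) (hv₀ : v t₀ x ≤ A * exp (-ε * t₀))
    (hux : ∀ s ∈ Ico t₀ t, u s x ≤ φ + M) (hvC : ∀ s ∈ Ico t₀ t, v s x ≤ C)
    (hvx : ∀ s ∈ Ico t₀ t, v s x ≤ A * exp (-ε * s) + M)
    (hbound : ∀ s ∈ Ico t₀ t, ∀ᵐ y ∂(volume.restrict Ω), v s y ≤ A * exp (-ε * s) + M) :
    v t x ≤ A * exp (-ε * t) + (d₂ * γinf + C * (C + φ)) * M * (t - t₀) := by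
  have hψ : ∀ s, HasDerivAt (fun s => A * exp (-ε * s)) (-ε * (A * exp (-ε * s))) s :=
    fun s => (((hasDerivAt_id' s).const_mul (-ε)).exp.const_mul A).congr_deriv (by ring)
  have key := le_add_mul_of_hasDerivWithinAt_le_of_le (L := 0)
    (D := (d₂ * γinf + C * (C + φ)) * M) ht
    (((hsol.continuousOn_v hx).mono fun s hs => ht₀.trans hs.1).fun_sub
      (by fun_prop : Continuous fun s => A * exp (-ε * s)).continuousOn)
    (fun s hs => ((hsol.2.2 x hx s (ht₀.trans hs.1)).2.mono
      (Ici_subset_Ici.mpr (ht₀.trans hs.1))).fun_sub (hψ s).hasDerivWithinAt)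
    (sub_nonpos.mpr hv₀) (by positivity) fun s hs hg => ?_
  · linarith
  have hs0 : 0 ≤ s := ht₀.trans hs.1
  have hψv : A * exp (-ε * s) ≤ v s x := sub_nonneg.mp hg
  have hψA : A * exp (-ε * s) ≤ A :=
    mul_le_of_le_one_right hA (exp_le_one_iff.mpr (by nlinarith))
  have hΓ := mul_le_mul_of_nonneg_left
    (hγ₂.gammaOp_le (hsol.1 s hs0).2 hx hM hψv (hbound s hs)) hd₂
  have hreact := mul_sq_sub_mul_le ((mul_nonneg hA (exp_pos _).le).trans hψv) (hvC s hs) hφ hM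
    (hux s hs) ((hvx s hs).trans (by linarith)) hφA
  nlinarith [mul_le_mul_of_nonneg_left hψv hε]

theorem u_le_and_v_le_exp (hsol : IsGSSol Ω d₁ d₂ f κ γ₁ γ₂ u0 v0 u v)
    (hγ₁ : KernelCondN Ω γ₁ γinf) (hγ₂ : KernelCondN Ω γ₂ γinf) (hγinf : 0 ≤ γinf)
    (hd₁ : 0 ≤ d₁) (hd₂ : 0 ≤ d₂) (hf : 0 ≤ f) {G : Set (EuclideanSpace ℝ (Fin n))}
    (hGΩ : G ⊆ Ω) (hG : ∀ᵐ y ∂(volume.restrict Ω), y ∈ G)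
    (hGnonneg : ∀ y ∈ G, ∀ s, 0 ≤ s → 0 ≤ u s y ∧ 0 ≤ v s y) {T C φ A ε : ℝ} (hC : 0 ≤ C)
    (hGC : ∀ y ∈ G, ∀ s ∈ Icc 0 T, u s y + v s y ≤ C) (hφ : 1 ≤ φ) (hA : 0 ≤ A) (hε : 0 ≤ ε)
    (hφA : φ * A ≤ f + κ - ε) (hG0 : ∀ y ∈ G, u 0 y ≤ φ ∧ v 0 y ≤ A) :
    ∀ t ∈ Icc 0 T, ∀ y ∈ G, u t y ≤ φ ∧ v t y ≤ A * exp (-ε * t) := by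
  set excess : ℝ → EuclideanSpace ℝ (Fin n) → ℝ :=
    fun t y => max (max (u t y - φ) (v t y - A * exp (-ε * t))) 0
  have hexcess_le {t y M} : excess t y ≤ M ↔
      (u t y ≤ φ + M ∧ v t y ≤ A * exp (-ε * t) + M) ∧ 0 ≤ M := by
    simp only [excess, max_le_iff, sub_le_iff_le_add']
  have hψ : ∀ t, 0 ≤ A * exp (-ε * t) := fun t => by positivity
  have hzero := eq_zero_of_le_mul_sup_of_bounded (S := G) (E := excess) (T := T) (B := C)
    (L := d₁ * γinf + (d₂ * γinf + C * (C + φ))) (by positivity) ?bounds ?initial ?step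
  · intro t ht y hy
    have h := (hexcess_le (M := 0)).mp (hzero t ht y hy).le
    simpa using h.1
  case bounds =>
    intro t ht y hy
    obtain ⟨hu, hv⟩ := hGnonneg y hy t ht.1
    refine ⟨le_max_right _ _, hexcess_le.mpr ⟨⟨?_, ?_⟩, hC⟩⟩
    · linarith [hGC y hy t ht]
    · linarith [hGC y hy t ht, hψ t]
  case initial =>
    intro y hy
    refine le_antisymm (hexcess_le.mpr ⟨?_, le_rfl⟩) (le_max_right _ _)
    simpa using hG0 y hy
  case step =>
    intro t₀ t M ht₀ ht htT hM hvanish hle y hy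
    have h₀ := ((hexcess_le (M := 0)).mp (hvanish t₀ ⟨ht₀, le_rfl⟩ y hy).le).1
    have hwin : ∀ s ∈ Ico t₀ t, ∀ z ∈ G, u s z ≤ φ + M ∧ v s z ≤ A * exp (-ε * s) + M :=
      fun s hs z hz => (hexcess_le.mp (hle s (Ico_subset_Icc_self hs) z hz)).1
    have hu := hsol.u_le_add_mul hγ₁ hγinf hd₁ hf (hGΩ hy) hφ hM ht₀ ht (by simpa using h₀.1)
      fun s hs => hG.mono fun z hz => (hwin s hs z hz).1
    have hv := hsol.v_le_add_mul hγ₂ hγinf hd₂ (hGΩ hy) (by linarith) hA hε hφA hC hM ht₀ ht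
      (by simpa using h₀.2) (fun s hs => (hwin s hs y hy).1)
      (fun s hs => by linarith [hGC y hy s ⟨ht₀.trans hs.1, hs.2.le.trans htT⟩,
        (hGnonneg y hy s (ht₀.trans hs.1)).1])
      (fun s hs => (hwin s hs y hy).2) fun s hs => hG.mono fun z hz => (hwin s hs z hz).2
    have hu' : 0 ≤ d₁ * γinf * M * (t - t₀) := by
      have := sub_nonneg.mpr ht; positivity
    have hv' : 0 ≤ (d₂ * γinf + C * (C + φ)) * M * (t - t₀) := by
      have := sub_nonneg.mpr ht; positivity
    refine hexcess_le.mpr ⟨⟨?_, ?_⟩, by nlinarith⟩ <;> nlinarith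

theorem ae_forall_nonneg (hsol : IsGSSol Ω d₁ d₂ f κ γ₁ γ₂ u0 v0 u v) (hΩ : MeasurableSet Ω)
    (hupos : NonnegSol Ω u) (hvpos : NonnegSol Ω v) :
    ∀ᵐ y ∂(volume.restrict Ω), ∀ s, 0 ≤ s → 0 ≤ u s y ∧ 0 ≤ v s y := by
  have hu := ae_forall_nonneg_of_continuousOn hupos
    ((ae_restrict_mem hΩ).mono fun y hy => hsol.continuousOn_u hy)
  have hv := ae_forall_nonneg_of_continuousOn hvpos
    ((ae_restrict_mem hΩ).mono fun y hy => hsol.continuousOn_v hy)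
  filter_upwards [hu, hv] with y hu hv s hs using ⟨hu s hs, hv s hs⟩

theorem ae_v_le_exp (hsol : IsGSSol Ω d₁ d₂ f κ γ₁ γ₂ u0 v0 u v) (hΩ : MeasurableSet Ω)
    (hγ₁ : KernelCondN Ω γ₁ γinf) (hγ₂ : KernelCondN Ω γ₂ γinf) (hγinf : 0 ≤ γinf)
    (hd₁ : 0 ≤ d₁) (hd₂ : 0 ≤ d₂) (hf : 0 ≤ f) (hκ : 0 ≤ κ) (hupos : NonnegSol Ω u)
    (hvpos : NonnegSol Ω v) {T φ A ε : ℝ} (hT : 0 ≤ T) (hφ : 1 ≤ φ) (hA : 0 ≤ A) (hε : 0 ≤ ε)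
    (hφA : φ * A ≤ f + κ - ε) (hu0 : ∀ᵐ y ∂(volume.restrict Ω), u0 y ≤ φ)
    (hv0 : ∀ᵐ y ∂(volume.restrict Ω), v0 y ≤ A) :
    ∀ᵐ y ∂(volume.restrict Ω), v T y ≤ A * exp (-ε * T) := by
  set K := (d₁ + d₂) * γinf + f + κ
  have hK : 0 ≤ K := by positivity
  set C := exp (K * T) * (supN Ω (u T) + supN Ω (v T))
  set G := {y | y ∈ Ω ∧ (∀ s, 0 ≤ s → 0 ≤ u s y ∧ 0 ≤ v s y) ∧ u0 y ≤ φ ∧ v0 y ≤ A ∧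
    u T y + v T y ≤ supN Ω (u T) + supN Ω (v T)}
  have hG : ∀ᵐ y ∂(volume.restrict Ω), y ∈ G := by
    filter_upwards [ae_restrict_mem hΩ, hsol.ae_forall_nonneg hΩ hupos hvpos, hu0, hv0,
      ae_abs_le_supN (hsol.1 T hT).1, ae_abs_le_supN (hsol.1 T hT).2]
      with y hy hnonneg hu0y hv0y huT hvT
    exact ⟨hy, hnonneg, hu0y, hv0y, by linarith [le_abs_self (u T y), le_abs_self (v T y)]⟩
  -- the bound at the final time `T` propagates backwards through the monotone weighted sum
  have hGC : ∀ y ∈ G, ∀ s ∈ Icc 0 T, u s y + v s y ≤ C := by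
    intro y hy s hs
    have hsum : 0 ≤ u s y + v s y := add_nonneg (hy.2.1 s hs.1).1 (hy.2.1 s hs.1).2
    have hmono := hsol.monotoneOn_exp_mul_add hγ₁ hγ₂ hγinf hd₁ hd₂ hf hκ hupos hvpos hy.1
      (fun s hs => (hy.2.1 s hs).1) (fun s hs => (hy.2.1 s hs).2)
    calc u s y + v s y ≤ exp (K * s) * (u s y + v s y) :=
          le_mul_of_one_le_left hsum (one_le_exp (mul_nonneg hK hs.1))
      _ ≤ exp (K * T) * (u T y + v T y) := hmono hs.1 hT hs.2
      _ ≤ C := mul_le_mul_of_nonneg_left hy.2.2.2.2 (exp_pos _).le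
  have hC : 0 ≤ C := by
    have := supN_nonneg (Ω := Ω) (z := u T); have := supN_nonneg (Ω := Ω) (z := v T); positivity
  have hG0 : ∀ y ∈ G, u 0 y ≤ φ ∧ v 0 y ≤ A := fun y hy => by
    rw [(hsol.2.1 y hy.1).1, (hsol.2.1 y hy.1).2]
    exact ⟨hy.2.2.1, hy.2.2.2.1⟩
  filter_upwards [hG] with y hy
  exact (hsol.u_le_and_v_le_exp hγ₁ hγ₂ hγinf hd₁ hd₂ hf (fun y hy => hy.1) hG
    (fun y hy => hy.2.1) hC hGC hφ hA hε hφA hG0 T ⟨hT, le_rfl⟩ y hy).2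

end IsGSSol
end GrayScott

theorem statement7_general
    (n : ℕ)
    (Ω : Set (EuclideanSpace ℝ (Fin n)))
    (hΩopen : IsOpen Ω)
    (d₁ d₂ f κ : ℝ) (hd₁ : 0 < d₁) (hd₂ : 0 < d₂) (hf : 0 < f) (hκ : 0 < κ)
    (γ₁ γ₂ : EuclideanSpace ℝ (Fin n) → EuclideanSpace ℝ (Fin n) → ℝ)
    (γinf : ℝ) (hγinf : 1 ≤ γinf)
    (hγ₁ : KernelCondN Ω γ₁ γinf) (hγ₂ : KernelCondN Ω γ₂ γinf)
    (u0 v0 : EuclideanSpace ℝ (Fin n) → ℝ)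
    (hu0 : MemLp u0 ⊤ (volume.restrict Ω)) (hv0 : MemLp v0 ⊤ (volume.restrict Ω))
    (u v : ℝ → EuclideanSpace ℝ (Fin n) → ℝ)
    (hsol : IsGSSol Ω d₁ d₂ f κ γ₁ γ₂ u0 v0 u v)
    (hupos : NonnegSol Ω u) (hvpos : NonnegSol Ω v)
    (δ ε : ℝ) (hδ : 0 ≤ δ) (hε : 0 < ε)
    (hu0small : supN Ω u0 ≤ 1 + δ) (hv0small : supN Ω v0 < (f + κ - ε) / (1 + δ)) :
    ∀ t, 0 ≤ t → supN Ω (v t) ≤ Real.exp (-ε * t) * supN Ω v0 := by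
  intro t ht
  have hφA : (1 + δ) * supN Ω v0 ≤ f + κ - ε := by
    rw [lt_div_iff₀ (by linarith)] at hv0small
    linarith
  have hv := hsol.ae_v_le_exp hΩopen.measurableSet hγ₁ hγ₂ (by linarith) hd₁.le hd₂.le hf.le
    hκ.le hupos hvpos ht (by linarith) supN_nonneg hε.le hφA
    ((ae_abs_le_supN hu0).mono fun y hy => (le_abs_self _).trans (hy.trans hu0small))
    ((ae_abs_le_supN hv0).mono fun y hy => (le_abs_self _).trans hy)
  rw [mul_comm]
  refine supN_le_of_ae_abs_le (mul_nonneg supN_nonneg (exp_pos _).le) ?_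
  filter_upwards [hv, hvpos t ht] with y hy hy0
  rwa [abs_of_nonneg hy0]

/-- proof of Theorem 1.2, exponential decay of `v`: under the
strengthened smallness condition, `‖v(t)‖_∞ ≤ e^{−εt} ‖v⁰‖_∞` for all `t ≥ 0`. -/
theorem statement7
    (n : ℕ) (hn : 1 ≤ n)
    (Ω : Set (EuclideanSpace ℝ (Fin n)))
    (hΩopen : IsOpen Ω) (hΩconn : IsConnected Ω) (hΩbdd : Bornology.IsBounded Ω)
    (d₁ d₂ f κ : ℝ) (hd₁ : 0 < d₁) (hd₂ : 0 < d₂) (hf : 0 < f) (hκ : 0 < κ)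
    (γ₁ γ₂ : EuclideanSpace ℝ (Fin n) → EuclideanSpace ℝ (Fin n) → ℝ)
    (γinf : ℝ) (hγinf : 1 ≤ γinf)
    (hγ₁ : KernelCondN Ω γ₁ γinf) (hγ₂ : KernelCondN Ω γ₂ γinf)
    (u0 v0 : EuclideanSpace ℝ (Fin n) → ℝ)
    (hu0 : MemLp u0 ⊤ (volume.restrict Ω)) (hv0 : MemLp v0 ⊤ (volume.restrict Ω))
    (hu0pos : ∀ᵐ x ∂(volume.restrict Ω), 0 ≤ u0 x)
    (hv0pos : ∀ᵐ x ∂(volume.restrict Ω), 0 ≤ v0 x)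
    (u v : ℝ → EuclideanSpace ℝ (Fin n) → ℝ)
    (hsol : IsGSSol Ω d₁ d₂ f κ γ₁ γ₂ u0 v0 u v)
    (hupos : NonnegSol Ω u) (hvpos : NonnegSol Ω v)
    (δ ε : ℝ) (hδ : 0 ≤ δ) (hε : 0 < ε)
    (hu0small : supN Ω u0 ≤ 1 + δ) (hv0small : supN Ω v0 < (f + κ - ε) / (1 + δ)) :
    ∀ t, 0 ≤ t → supN Ω (v t) ≤ Real.exp (-ε * t) * supN Ω v0 :=
  statement7_general n Ω hΩopen d₁ d₂ f κ hd₁ hd₂ hf hκ γ₁ γ₂ γinf hγinf hγ₁ hγ₂ u0 v0 hu0 hv0 u v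
    hsol hupos hvpos δ ε hδ hε hu0small hv0small

end
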